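/- Let β, t ∈ ℝ with β > 0 and t > 0, and let 0 < γ < β. Then (1/(2πi Γ(β))) ∫_{Re(z) = -γ} Γ(-z) Γ(β + z) t^z dz = (1 + t)^{-β}, where the contour integral is over the vertical line Re(z) = -γ and converges absolutely. -/

import Mathlib

/-!
The substitution `x = y / (1 - y)` turns the Mellin transform of `(1 + x) ^ (-β)` into
Euler's Beta integral, so it equals `Γ(s) Γ(β - s) / Γ(β)` on the strip `0 < re s < β`. Mellin
inversion on the line `re s = γ`, followed by the reflection `z = -s`, is the claimed identity.
Absolute convergence on that line comes from
`s (s + 1) Γ(s) Γ(β - s) = Γ(β + 2) B(s + 2, β - s)`: the Beta factor is bounded on a vertical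
line, so the integrand is `O(1 / |s| ^ 2)`.
-/

open MeasureTheory Complex Set

lemma hasDerivAt_div_one_sub {y : ℝ} (hy : y ≠ 1) :
    HasDerivAt (fun y : ℝ => y / (1 - y)) ((1 - y)⁻¹ ^ 2) y := by
  have h : (1 : ℝ) - y ≠ 0 := sub_ne_zero.2 hy.symm
  refine ((hasDerivAt_id' y).div ((hasDerivAt_id' y).const_sub 1) h).congr_deriv ?_
  field_simp
  ring

lemma injOn_div_one_sub : InjOn (fun y : ℝ => y / (1 - y)) (Ioo 0 1) := by
  intro y hy z hz h
  have hy' : (1 : ℝ) - y ≠ 0 := by linarith [hy.2]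
  have hz' : (1 : ℝ) - z ≠ 0 := by linarith [hz.2]
  field_simp at h
  linarith

lemma image_div_one_sub_Ioo : (fun y : ℝ => y / (1 - y)) '' Ioo 0 1 = Ioi 0 := by
  refine Subset.antisymm ?_ fun x (hx : 0 < x) => ⟨x / (1 + x), ?_, ?_⟩
  · rintro _ ⟨y, hy, rfl⟩
    exact div_pos hy.1 (sub_pos.2 hy.2)
  · exact ⟨by positivity, (div_lt_one (by positivity)).2 (by linarith)⟩
  · have : (1 : ℝ) + x ≠ 0 := by positivity
    field_simp
    ring

lemma mellin_integrand_comp_div_one_sub_eq_beta_integrand {b s : ℂ} {y : ℝ}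
    (hy : y ∈ Ioo 0 1) :
    |(1 - y)⁻¹ ^ 2| • (((y / (1 - y) : ℝ) : ℂ) ^ (s - 1) • ((1 + y / (1 - y) : ℝ) : ℂ) ^ (-b)) =
      (y : ℂ) ^ (s - 1) * (1 - (y : ℂ)) ^ (b - s - 1) := by
  obtain ⟨hy0, hy1⟩ := hy
  have hu : 0 < 1 - y := sub_pos.2 hy1
  have hu' : ((1 - y : ℝ) : ℂ) ≠ 0 := ofReal_ne_zero.2 hu.ne'
  have h1 : (1 + y / (1 - y) : ℝ) = (1 - y)⁻¹ := by field_simp; ring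
  have h2 : (y / (1 - y) : ℝ) = y * (1 - y)⁻¹ := div_eq_mul_inv _ _
  have h3 : (((1 - y)⁻¹ ^ 2 : ℝ) : ℂ) = ((1 - y : ℝ) : ℂ) ^ (-2 : ℂ) := by
    rw [show (1 - y)⁻¹ ^ 2 = (1 - y) ^ (-2 : ℝ) by
      rw [Real.rpow_neg hu.le, inv_pow]; norm_cast, ofReal_cpow hu.le]
    push_cast
    rfl
  rw [abs_of_pos (by positivity), h1, h2, ofReal_mul,
    mul_cpow_ofReal_nonneg hy0.le (by positivity), ofReal_inv, inv_cpow_ofReal_nonneg hu.le,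
    inv_cpow_ofReal_nonneg hu.le, ← cpow_neg, ← cpow_neg, real_smul, smul_eq_mul, h3]
  rw [show (1 : ℂ) - y = ((1 - y : ℝ) : ℂ) by push_cast; rfl,
    show b - s - 1 = -2 + (-(s - 1) + - -b) by ring, cpow_add _ _ hu', cpow_add _ _ hu']
  ring

theorem hasMellin_one_add_cpow_neg {b s : ℂ} (hs : 0 < s.re) (hsb : s.re < b.re) :
    HasMellin (fun x : ℝ => ((1 + x : ℝ) : ℂ) ^ (-b)) s (Gamma s * Gamma (b - s) / Gamma b) := by
  have hbs : 0 < (b - s).re := by rw [sub_re]; linarith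
  have hderiv : ∀ y ∈ Ioo (0 : ℝ) 1,
      HasDerivWithinAt (fun y : ℝ => y / (1 - y)) ((1 - y)⁻¹ ^ 2) (Ioo 0 1) y :=
    fun y hy => (hasDerivAt_div_one_sub hy.2.ne).hasDerivWithinAt
  have hsubst : EqOn
      (fun y : ℝ => |(1 - y)⁻¹ ^ 2| •
        (((y / (1 - y) : ℝ) : ℂ) ^ (s - 1) • ((1 + y / (1 - y) : ℝ) : ℂ) ^ (-b)))
      (fun y : ℝ => (y : ℂ) ^ (s - 1) * (1 - (y : ℂ)) ^ (b - s - 1)) (Ioo 0 1) :=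
    fun _ hy => mellin_integrand_comp_div_one_sub_eq_beta_integrand hy
  refine ⟨?_, ?_⟩
  · rw [MellinConvergent, ← image_div_one_sub_Ioo,
      integrableOn_image_iff_integrableOn_abs_deriv_smul measurableSet_Ioo hderiv
        injOn_div_one_sub]
    exact ((betaIntegral_convergent hs hbs).1.mono_set Ioo_subset_Ioc_self).congr_fun hsubst.symm
      measurableSet_Ioo
  · rw [mellin, ← image_div_one_sub_Ioo,
      integral_image_eq_integral_abs_deriv_smul measurableSet_Ioo hderiv injOn_div_one_sub,
      setIntegral_congr_fun measurableSet_Ioo hsubst, ← integral_Ioc_eq_integral_Ioo,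
      ← intervalIntegral.integral_of_le zero_le_one, ← betaIntegral,
      betaIntegral_eq_Gamma_mul_div _ _ hs hbs, add_sub_cancel]

lemma continuousOn_Gamma_re_pos : ContinuousOn Gamma {s | 0 < s.re} := by
  refine fun s (hs : 0 < s.re) =>
    (differentiableAt_Gamma s fun m hm => ?_).continuousAt.continuousWithinAt
  rw [hm, neg_re, natCast_re] at hs
  linarith [m.cast_nonneg (α := ℝ)]

lemma Gamma_mul_Gamma_eq_betaIntegral_add_two {b s : ℂ} (hs : 0 < s.re) (hbs : 0 < (b - s).re) :
    s * (s + 1) * (Gamma s * Gamma (b - s)) = Gamma (b + 2) * betaIntegral (s + 2) (b - s) := by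
  have hs0 : s ≠ 0 := fun h => by simp [h] at hs
  have hs1 : s + 1 ≠ 0 := fun h => by
    have := congrArg re h; rw [add_re, one_re, zero_re] at this; linarith
  have h := Gamma_mul_Gamma_eq_betaIntegral (s := s + 2) (by rw [add_re]; norm_num; linarith) hbs
  have h2 : Gamma (s + 2) = (s + 1) * (s * Gamma s) := by
    rw [show s + 2 = s + 1 + 1 by ring, Gamma_add_one _ hs1, Gamma_add_one _ hs0]
  rw [show s + 2 + (b - s) = b + 2 by ring, h2] at h
  rw [← h]
  ring

lemma norm_betaIntegral_le (u v : ℂ) :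
    ‖betaIntegral u v‖ ≤ ∫ x in Ioo (0 : ℝ) 1, x ^ (u.re - 1) * (1 - x) ^ (v.re - 1) := by
  rw [betaIntegral, intervalIntegral.integral_of_le zero_le_one, integral_Ioc_eq_integral_Ioo]
  refine (norm_integral_le_integral_norm _).trans_eq (setIntegral_congr_fun measurableSet_Ioo
    fun x hx => ?_)
  rw [norm_mul, norm_cpow_eq_rpow_re_of_pos hx.1,
    show (1 : ℂ) - x = ((1 - x : ℝ) : ℂ) by push_cast; rfl,
    norm_cpow_eq_rpow_re_of_pos (sub_pos.2 hx.2)]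
  simp

lemma norm_Gamma_mul_Gamma_sub_le {b s : ℂ} (hs : 0 < s.re) (hbs : 0 < (b - s).re) :
    ‖Gamma s * Gamma (b - s)‖ ≤ ‖Gamma (b + 2)‖ *
      (∫ x in Ioo (0 : ℝ) 1, x ^ (s.re + 1) * (1 - x) ^ ((b - s).re - 1)) / ‖s‖ ^ 2 := by
  have hs0 : 0 < ‖s‖ := norm_pos_iff.2 fun h => by simp [h] at hs
  have hss1 : ‖s‖ ≤ ‖s + 1‖ := by
    refine (sq_le_sq₀ (norm_nonneg _) (norm_nonneg _)).1 ?_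
    rw [Complex.sq_norm, Complex.sq_norm, normSq_apply, normSq_apply, add_re, add_im, one_re,
      one_im]
    nlinarith
  have hB := norm_betaIntegral_le (s + 2) (b - s)
  rw [show (s + 2).re - 1 = s.re + 1 by simp; ring] at hB
  rw [le_div_iff₀ (by positivity)]
  calc ‖Gamma s * Gamma (b - s)‖ * ‖s‖ ^ 2
      ≤ ‖s * (s + 1) * (Gamma s * Gamma (b - s))‖ := by
        rw [norm_mul (s * (s + 1)), norm_mul s, mul_comm, sq]
        gcongr
    _ = ‖Gamma (b + 2)‖ * ‖betaIntegral (s + 2) (b - s)‖ := by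
        rw [Gamma_mul_Gamma_eq_betaIntegral_add_two hs hbs, norm_mul]
    _ ≤ _ := by gcongr

lemma integrable_const_div_sq_add_sq {σ : ℝ} (hσ : σ ≠ 0) (C : ℝ) :
    Integrable fun y : ℝ => C / (σ ^ 2 + y ^ 2) := by
  refine ((integrable_inv_one_add_sq.comp_div hσ).const_mul (C / σ ^ 2)).congr
    (ae_of_all _ fun y => ?_)
  field_simp

lemma integrable_Gamma_mul_Gamma_sub_verticalLine {b : ℂ} {σ : ℝ} (hσ : 0 < σ)
    (hσb : σ < b.re) :
    Integrable fun y : ℝ => Gamma (σ + y * I) * Gamma (b - (σ + y * I)) := by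
  have hre : ∀ y : ℝ, ((σ : ℂ) + y * I).re = σ := by simp
  have hbre : ∀ y : ℝ, (b - (σ + y * I)).re = b.re - σ := by simp
  have hcont : Continuous fun y : ℝ => Gamma (σ + y * I) * Gamma (b - (σ + y * I)) :=
    (continuousOn_Gamma_re_pos.comp_continuous (by fun_prop) fun y => by
      simp only [mem_ofPred_eq, hre, hσ]).mul
    (continuousOn_Gamma_re_pos.comp_continuous (by fun_prop) fun y => by
      simp only [mem_ofPred_eq, hbre, sub_pos, hσb])
  refine (integrable_const_div_sq_add_sq hσ.ne' (‖Gamma (b + 2)‖ *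
    ∫ x in Ioo (0 : ℝ) 1, x ^ (σ + 1) * (1 - x) ^ (b.re - σ - 1))).mono'
    hcont.aestronglyMeasurable (ae_of_all _ fun y => ?_)
  have h := norm_Gamma_mul_Gamma_sub_le (b := b) (s := σ + y * I) (by rw [hre]; exact hσ)
    (by rw [hbre]; linarith)
  rwa [hre, hbre, Complex.sq_norm, normSq_add_mul_I] at h

/-- Parametrizing the line by `z = -γ + I v` turns `(1 / (2π i)) dz` into `(1 / (2π)) dv`. -/
theorem stmt8_general (β t γ : ℝ) (ht : 0 < t) (hγ0 : 0 < γ) (hγβ : γ < β) :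
    MeasureTheory.Integrable (fun v : ℝ =>
      Complex.Gamma (-(-(γ : ℂ) + Complex.I * v)) * Complex.Gamma ((β : ℂ) + (-(γ : ℂ) + Complex.I * v)) *
        (t : ℂ) ^ (-(γ : ℂ) + Complex.I * v)) ∧
    (1 / (2 * (Real.pi : ℂ) * Complex.Gamma (β : ℂ))) *
      ∫ v : ℝ, Complex.Gamma (-(-(γ : ℂ) + Complex.I * v)) * Complex.Gamma ((β : ℂ) + (-(γ : ℂ) + Complex.I * v)) *
        (t : ℂ) ^ (-(γ : ℂ) + Complex.I * v)
      = ((1 + t : ℝ) : ℂ) ^ (-(β : ℂ)) := by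
  set f : ℝ → ℂ := fun x => ((1 + x : ℝ) : ℂ) ^ (-(β : ℂ))
  set F : ℝ → ℂ := fun y => Gamma (γ + y * I) * Gamma (β - (γ + y * I))
  have hF : Integrable F := integrable_Gamma_mul_Gamma_sub_verticalLine hγ0 (by simpa using hγβ)
  have hmellin (y : ℝ) : HasMellin f (γ + y * I) (F y / Gamma β) :=
    hasMellin_one_add_cpow_neg (by simpa using hγ0) (by simpa using hγβ)
  have hf : ContinuousAt f t :=
    (continuousAt_cpow_const (ofReal_mem_slitPlane.2 (by linarith))).comp
      (f := fun x : ℝ => ((1 + x : ℝ) : ℂ)) (by fun_prop)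
  have hinv := mellinInv_mellin_eq γ f ht (by simpa using (hmellin 0).1)
    ((hF.div_const _).congr (ae_of_all _ fun y => (hmellin y).2.symm)) hf
  have hH : Integrable fun y : ℝ => (t : ℂ) ^ (-(γ + y * I)) * F y :=
    hF.bdd_mul (c := t ^ (-γ))
      ((Continuous.const_cpow (by fun_prop) (.inl (ofReal_ne_zero.2 ht.ne'))).aestronglyMeasurable)
      (ae_of_all _ fun y => by simp [norm_cpow_eq_rpow_re_of_pos ht])
  -- the integrand at `v` is the Mellin inversion integrand at `-v`, times `Γ(β)`
  have hG : (fun v : ℝ => Gamma (-(-(γ : ℂ) + I * v)) * Gamma ((β : ℂ) + (-(γ : ℂ) + I * v)) *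
      (t : ℂ) ^ (-(γ : ℂ) + I * v)) =
      fun v => (t : ℂ) ^ (-(γ + ((-v : ℝ) : ℂ) * I)) * F (-v) := by
    funext v
    simp only [F, ofReal_neg]
    ring_nf
  rw [hG]
  refine ⟨hH.comp_neg, ?_⟩
  change _ = f t
  rw [integral_neg_eq_self (fun y : ℝ => (t : ℂ) ^ (-(γ + y * I)) * F y), ← hinv, mellinInv]
  have hint : (fun y : ℝ => (t : ℂ) ^ (-(γ + y * I)) • mellin f (γ + y * I)) =
      fun y : ℝ => (t : ℂ) ^ (-(γ + y * I)) * F y / Gamma β :=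
    funext fun y => by rw [(hmellin y).2, smul_eq_mul, ← mul_div_assoc]
  rw [hint, integral_div, real_smul]
  push_cast
  ring

/-- Mellin–Barnes integral: for `0 < γ < β` and `t > 0`,
`(1/(2πi)) ∫_{Re z = -γ} Γ(-z) Γ(β+z) t^z dz = Γ(β) (1+t)^{-β}`.
Parametrizing the vertical line by `z = -γ + iv` turns `(1/(2πi)) dz` into `(1/(2π)) dv`. -/
theorem stmt8 (β t γ : ℝ) (hβ : 0 < β) (ht : 0 < t) (hγ0 : 0 < γ) (hγβ : γ < β) :
    MeasureTheory.Integrable (fun v : ℝ =>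
      Complex.Gamma (-(-(γ : ℂ) + Complex.I * v)) * Complex.Gamma ((β : ℂ) + (-(γ : ℂ) + Complex.I * v)) *
        (t : ℂ) ^ (-(γ : ℂ) + Complex.I * v)) ∧
    (1 / (2 * (Real.pi : ℂ) * Complex.Gamma (β : ℂ))) *
      ∫ v : ℝ, Complex.Gamma (-(-(γ : ℂ) + Complex.I * v)) * Complex.Gamma ((β : ℂ) + (-(γ : ℂ) + Complex.I * v)) *
        (t : ℂ) ^ (-(γ : ℂ) + Complex.I * v)
      = ((1 + t : ℝ) : ℂ) ^ (-(β : ℂ)) :=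
  stmt8_general β t γ ht hγ0 hγβ
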